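/- Deletion comparison: if S' = X ++ [z] ++ Y is an optimal assignment of j slots from a bidder set C, and X ++ Y ++ [w] is a valid assignment of j slots for some w ∈ C not in S' (so that removing z and appending any available bidder is feasible), then E([z] ++ Y) ≥ E(Y), i.e., e_z ≥ (1 − q_z)·E(Y). -/

import Mathlib

noncomputable section

/-- Efficiency of an ordered list of ads `(e, q)`. -/
def eff : List (ℝ × ℝ) → ℝ
  | [] => 0
  | a :: L => a.1 + a.2 * eff L

/-- Product of continuation probabilities of a list of ads. -/
def qprod (L : List (ℝ × ℝ)) : ℝ := (L.map Prod.snd).prod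

/-
If deleting `z` and appending `w` cannot beat the optimum, then after cancelling the common
prefix `X` (legitimate since `q(X) > 0`) the suffix `z :: Y` beats `Y ++ [w]`, hence beats `Y`
because appending a bidder with `e_w ≥ 0` behind `Y` does not lower the efficiency.
-/

theorem eff_append (A B : List (ℝ × ℝ)) : eff (A ++ B) = eff A + qprod A * eff B := by
  induction A with
  | nil => simp [eff, qprod]
  | cons a A ih =>
    simp only [List.cons_append, eff, ih, qprod, List.map_cons, List.prod_cons]
    ring

theorem qprod_nonneg {A : List (ℝ × ℝ)} (h : ∀ a ∈ A, 0 ≤ a.2) : 0 ≤ qprod A :=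
  List.prod_nonneg fun _ hx => by
    obtain ⟨a, ha, rfl⟩ := List.mem_map.mp hx
    exact h a ha

theorem eff_le_eff_append {A B : List (ℝ × ℝ)} (hA : 0 ≤ qprod A) (hB : 0 ≤ eff B) :
    eff A ≤ eff (A ++ B) := by
  rw [eff_append]
  exact le_add_of_nonneg_right (mul_nonneg hA hB)

theorem eff_le_of_eff_append_le_eff_append {X A B : List (ℝ × ℝ)} (hX : 0 < qprod X)
    (h : eff (X ++ A) ≤ eff (X ++ B)) : eff A ≤ eff B := by
  rw [eff_append, eff_append, add_le_add_iff_left] at h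
  exact le_of_mul_le_mul_left h hX

theorem List.nodup_delete_append_singleton {α : Type*} {X Y : List α} {z w : α}
    (hnd : (X ++ [z] ++ Y).Nodup) (hw : w ∉ X ++ [z] ++ Y) : (X ++ Y ++ [w]).Nodup := by
  have hsub : (X ++ Y).Sublist (X ++ [z] ++ Y) := by
    simp [(List.sublist_cons_self z Y).append_left X]
  refine (List.perm_append_singleton w (X ++ Y)).symm.nodup ?_
  exact List.nodup_cons.mpr ⟨fun h => hw (hsub.subset h), hsub.nodup hnd⟩

/-- Deletion comparison: if `S' = X ++ [z] ++ Y` is an optimal assignment of `j` slots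
from `C` and some bidder `w ∈ C` outside `S'` is available (so `X ++ Y ++ [w]` is a
valid assignment of the same length), then `E([z] ++ Y) ≥ E(Y)`, i.e.
`e_z ≥ (1 − q_z)·E(Y)`. -/
theorem deletion_comparison
    (C : Finset (ℝ × ℝ))
    (hC : ∀ a ∈ C, 0 ≤ a.1 ∧ 0 ≤ a.2 ∧ a.2 < 1)
    (X Y : List (ℝ × ℝ)) (z w : ℝ × ℝ)
    (hmem : ∀ a ∈ X ++ [z] ++ Y, a ∈ C)
    (hnd : (X ++ [z] ++ Y).Nodup)
    (hwC : w ∈ C) (hwnot : w ∉ X ++ [z] ++ Y)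
    (hqX : 0 < qprod X)
    (hopt : ∀ T : List (ℝ × ℝ), T.Nodup → (∀ a ∈ T, a ∈ C) →
      T.length = (X ++ [z] ++ Y).length → eff T ≤ eff (X ++ [z] ++ Y)) :
    eff ([z] ++ Y) ≥ eff Y ∧ z.1 ≥ (1 - z.2) * eff Y := by
  have hmemT : ∀ a ∈ X ++ Y ++ [w], a ∈ C := by
    intro a ha
    simp only [List.mem_append, List.mem_singleton] at ha
    rcases ha with (ha | ha) | rfl
    exacts [hmem a (by simp [ha]), hmem a (by simp [ha]), hwC]
  have hswap : eff (X ++ (Y ++ [w])) ≤ eff (X ++ ([z] ++ Y)) := by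
    simpa using hopt _ (List.nodup_delete_append_singleton hnd hwnot) hmemT
      (by simp)
  have hqY : 0 ≤ qprod Y := qprod_nonneg fun a ha => (hC a (hmem a (by simp [ha]))).2.1
  have hw : 0 ≤ eff [w] := by simpa [eff] using (hC w hwC).1
  have hdel : eff Y ≤ eff ([z] ++ Y) :=
    (eff_le_eff_append hqY hw).trans (eff_le_of_eff_append_le_eff_append hqX hswap)
  have hcons : eff ([z] ++ Y) = z.1 + z.2 * eff Y := rfl
  exact ⟨hdel, by linarith⟩
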